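/- (Correspondence of minimizers.) Assume there exists a plan solving both the robot's problem P_R and the human's problem P_H. Then a plan π solving P_R attains the minimum inexplicability score among all plans solving P_R (i.e., IE(π) ≤ IE(π') for every plan π' solving P_R) if and only if π is a minimum-length solution of the compiled problem P_mod (i.e., π solves P_mod and len(π) ≤ len(π'') for every plan π'' solving P_mod). -/
import Mathlib


/-- A STRIPS planning problem over fluents `F` and actions `A`. -/
structure Problem (F : Type) (A : Type) where
  pre : A → Set F
  add : A → Set F
  del : A → Set F
  I : Set F
  G : Set F

/-- Applying action `a` in state `s`. -/
def applyAct {F A : Type} (P : Problem F A) (s : Set F) (a : A) : Set F :=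
  (s ∪ P.add a) \ P.del a

/-- A plan is executable from a state iff each action's precondition holds
in the state obtained by applying the preceding actions. -/
def Executable {F A : Type} (P : Problem F A) : Set F → List A → Prop
  | _, [] => True
  | s, a :: rest => P.pre a ⊆ s ∧ Executable P (applyAct P s a) rest

/-- The resulting state of a plan from a state. -/
def result {F A : Type} (P : Problem F A) : Set F → List A → Set F
  | s, [] => s
  | s, a :: rest => result P (applyAct P s a) rest

/-- A plan solves a problem iff it is executable from the initial state and
its resulting state contains the goal. -/
def Solves {F A : Type} (P : Problem F A) (π : List A) : Prop :=
  Executable P P.I π ∧ P.G ⊆ result P P.I π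

/-- Tagged union of two states: `s_R ⊎ s_H ⊆ F ⊕ F`. -/
def tagUnion {F : Type} (sR sH : Set F) : Set (F ⊕ F) :=
  Sum.inl '' sR ∪ Sum.inr '' sH

/-- The compiled problem `P_mod` over `F ⊕ F`. -/
def compiled {F A : Type} (PR PH : Problem F A) : Problem (F ⊕ F) A where
  pre a := tagUnion (PR.pre a) (PH.pre a)
  add a := tagUnion (PR.add a) (PH.add a)
  del a := tagUnion (PR.del a) (PH.del a)
  I := tagUnion PR.I PH.I
  G := tagUnion PR.G PH.G

-- Inexplicability score (unit action costs): `exp (|len π - c_H*|)` if `π`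
-- also solves `P_H`, and `∞` otherwise; valued in `[0, ∞]`.
open Classical in
noncomputable def IE {F A : Type} (PH : Problem F A) (cH : ℕ) (π : List A) : ENNReal :=
  if Solves PH π then ENNReal.ofReal (Real.exp |(π.length : ℝ) - (cH : ℝ)|) else ⊤

lemma tagUnion_subset {F : Type} {a b c d : Set F} :
    tagUnion a b ⊆ tagUnion c d ↔ a ⊆ c ∧ b ⊆ d := by
  constructor
  · intro h
    constructor
    · intro x hx
      rcases h (Or.inl ⟨x, hx, rfl⟩) with ⟨y, hy, he⟩ | ⟨y, hy, he⟩
      · cases he; exact hy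
      · cases he
    · intro x hx
      rcases h (Or.inr ⟨x, hx, rfl⟩) with ⟨y, hy, he⟩ | ⟨y, hy, he⟩
      · cases he
      · cases he; exact hy
  · rintro ⟨h1, h2⟩ x (⟨y, hy, rfl⟩ | ⟨y, hy, rfl⟩)
    · exact Or.inl ⟨y, h1 hy, rfl⟩
    · exact Or.inr ⟨y, h2 hy, rfl⟩

lemma tag_apply {F A : Type} (PR PH : Problem F A) (sR sH : Set F) (a : A) :
    applyAct (compiled PR PH) (tagUnion sR sH) a
      = tagUnion (applyAct PR sR a) (applyAct PH sH a) := by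
  ext x
  cases x <;> simp [applyAct, compiled, tagUnion, Set.mem_union, Set.mem_diff,
    Set.mem_image] <;> tauto

lemma tag_result {F A : Type} (PR PH : Problem F A) :
    ∀ (π : List A) (sR sH : Set F),
    result (compiled PR PH) (tagUnion sR sH) π
      = tagUnion (result PR sR π) (result PH sH π) := by
  intro π
  induction π with
  | nil => intro sR sH; rfl
  | cons a rest ih =>
      intro sR sH
      simp only [result, tag_apply]
      exact ih _ _

lemma tag_exec {F A : Type} (PR PH : Problem F A) :
    ∀ (π : List A) (sR sH : Set F),
    Executable (compiled PR PH) (tagUnion sR sH) π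
      ↔ (Executable PR sR π ∧ Executable PH sH π) := by
  intro π
  induction π with
  | nil => intro sR sH; simp [Executable]
  | cons a rest ih =>
      intro sR sH
      have hpre : (compiled PR PH).pre a = tagUnion (PR.pre a) (PH.pre a) := rfl
      simp only [Executable, tag_apply, ih, hpre, tagUnion_subset]
      tauto

lemma solves_compiled {F A : Type} (PR PH : Problem F A) (π : List A) :
    Solves (compiled PR PH) π ↔ (Solves PR π ∧ Solves PH π) := by
  have hI : (compiled PR PH).I = tagUnion PR.I PH.I := rfl
  have hG : (compiled PR PH).G = tagUnion PR.G PH.G := rfl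
  simp only [Solves, hI, hG, tag_exec, tag_result, tagUnion_subset]
  tauto

theorem stmt_9 {F A : Type} (PR PH : Problem F A) (cH : ℕ)
    (hcH_att : ∃ π : List A, Solves PH π ∧ π.length = cH)
    (hcH_min : ∀ π : List A, Solves PH π → cH ≤ π.length)
    (hboth : ∃ π : List A, Solves PR π ∧ Solves PH π)
    (π : List A) (hR : Solves PR π) :
    (∀ π' : List A, Solves PR π' → IE PH cH π ≤ IE PH cH π') ↔
    (Solves (compiled PR PH) π ∧
      ∀ π'' : List A, Solves (compiled PR PH) π'' → π.length ≤ π''.length) := by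

  have hcomp := solves_compiled PR PH
  constructor
  · intro hmin
    obtain ⟨π0, hπ0R, hπ0H⟩ := hboth
    -- π must solve PH
    have hle := hmin π0 hπ0R
    have hπH : Solves PH π := by
      by_contra hnot
      rw [IE, if_neg hnot] at hle
      rw [IE, if_pos hπ0H] at hle
      exact ENNReal.ofReal_ne_top (top_le_iff.mp hle)
    refine ⟨(hcomp π).mpr ⟨hR, hπH⟩, ?_⟩
    intro π'' hπ''
    obtain ⟨hπ''R, hπ''H⟩ := (hcomp π'').mp hπ''
    have h := hmin π'' hπ''R
    rw [IE, if_pos hπH, IE, if_pos hπ''H] at h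
    have hexp : Real.exp |(π.length : ℝ) - cH| ≤ Real.exp |(π''.length : ℝ) - cH| := by
      have := (ENNReal.ofReal_le_ofReal_iff (Real.exp_nonneg _)).mp h
      exact this
    have habs := Real.exp_le_exp.mp hexp
    have h1 : (cH : ℝ) ≤ π.length := by exact_mod_cast hcH_min π hπH
    have h2 : (cH : ℝ) ≤ π''.length := by exact_mod_cast hcH_min π'' hπ''H
    rw [abs_of_nonneg (by linarith), abs_of_nonneg (by linarith)] at habs
    have : (π.length : ℝ) ≤ π''.length := by linarith
    exact_mod_cast this
  · rintro ⟨hsol, hminlen⟩ π' hπ'R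
    obtain ⟨-, hπH⟩ := (hcomp π).mp hsol
    rw [IE, if_pos hπH, IE]
    by_cases hπ'H : Solves PH π'
    · rw [if_pos hπ'H]
      have hlen := hminlen π' ((hcomp π').mpr ⟨hπ'R, hπ'H⟩)
      apply ENNReal.ofReal_le_ofReal
      apply Real.exp_le_exp.mpr
      have h1 : (cH : ℝ) ≤ π.length := by exact_mod_cast hcH_min π hπH
      have h2 : (cH : ℝ) ≤ π'.length := by exact_mod_cast hcH_min π' hπ'H
      have h3 : (π.length : ℝ) ≤ π'.length := by exact_mod_cast hlen
      rw [abs_of_nonneg (by linarith), abs_of_nonneg (by linarith)]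
      linarith
    · rw [if_neg hπ'H]; exact le_top
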